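/- Let g1 and g2 be abelian Lie algebras with Hermitian structures (J1, k1) and (J2, k2), and (ρ1, ρ2) a compatible couple defining the Hermitian twisted cartesian product (g1 ⋈ g2, J, k). Then the Lee form is θ(x) = −tr(ρ1(x)) and θ(a) = −tr(ρ2(a)); consequently, the product is balanced if and only if tr(ρ1(x)) = 0 and tr(ρ2(a)) = 0 for all x ∈ g1, a ∈ g2, and it is locally conformally balanced if and only if tr(ρ2(ρ1(x)a)) = tr(ρ1(ρ2(a)x)) for all x ∈ g1, a ∈ g2. -/

import Mathlib

open scoped BigOperators

section TCPDefs

variable {V V₁ V₂ W : Type*} [AddCommGroup V] [Module ℝ V]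
  [AddCommGroup V₁] [Module ℝ V₁] [AddCommGroup V₂] [Module ℝ V₂]
  [AddCommGroup W] [Module ℝ W]

/-- Real-bilinearity of a two-argument map. -/
def IsBilinMap (f : V₁ → V₂ → W) : Prop :=
  (∀ x y z, f (x + y) z = f x z + f y z) ∧ (∀ (c : ℝ) x z, f (c • x) z = c • f x z) ∧
  (∀ x y z, f x (y + z) = f x y + f x z) ∧ (∀ (c : ℝ) x z, f x (c • z) = c • f x z)

/-- The Jacobi identity for a bracket. -/
def Jacobi (l : V → V → V) : Prop :=
  ∀ u v w, l (l u v) w + l (l v w) u + l (l w u) v = 0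

/-- A (real) Lie bracket: bilinear, antisymmetric, Jacobi. -/
def IsLieBracket (l : V → V → V) : Prop :=
  IsBilinMap l ∧ (∀ u v, l u v = -l v u) ∧ Jacobi l

/-- D is a derivation of the bracket l. -/
def IsDeriv (l : V → V → V) (D : V → V) : Prop :=
  ∀ u v, D (l u v) = l (D u) v + l u (D v)

/-- Compatibility of the couple (ρ1, ρ2). -/
def Compat (ρ1 : V₁ → V₂ → V₂) (ρ2 : V₂ → V₁ → V₁) : Prop :=
  (∀ (x : V₁) (a b : V₂), ρ1 (ρ2 a x) b = ρ1 (ρ2 b x) a) ∧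
  (∀ (x y : V₁) (a : V₂), ρ2 (ρ1 x a) y = ρ2 (ρ1 y a) x)

/-- The twisted cartesian product bracket on V₁ × V₂. -/
def twBr (l1 : V₁ → V₁ → V₁) (l2 : V₂ → V₂ → V₂)
    (ρ1 : V₁ → V₂ → V₂) (ρ2 : V₂ → V₁ → V₁) (u v : V₁ × V₂) : V₁ × V₂ :=
  (l1 u.1 v.1 + ρ2 u.2 v.1 - ρ2 v.2 u.1, l2 u.2 v.2 + ρ1 u.1 v.2 - ρ1 v.1 u.2)

/-- The product almost complex structure. -/
def prodJ (J1 : V₁ → V₁) (J2 : V₂ → V₂) (u : V₁ × V₂) : V₁ × V₂ := (J1 u.1, J2 u.2)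

/-- The product metric. -/
def prodK (k1 : V₁ → V₁ → ℝ) (k2 : V₂ → V₂ → ℝ) (u v : V₁ × V₂) : ℝ :=
  k1 u.1 v.1 + k2 u.2 v.2

/-- Nijenhuis tensor of J with respect to the bracket l. -/
def nijenhuis (l : V → V → V) (J : V → V) (u v : V) : V :=
  l (J u) (J v) - l u v - J (l (J u) v + l u (J v))

/-- Fundamental 2-form ω(u,v) = k(Ju, v). -/
def fund (k : V → V → ℝ) (J : V → V) (u v : V) : ℝ := k (J u) v

/-- Chevalley–Eilenberg differential of a 2-form. -/
def d2 (l : V → V → V) (ω : V → V → ℝ) (u v w : V) : ℝ :=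
  -ω (l u v) w + ω (l u w) v - ω (l v w) u

/-- Chevalley–Eilenberg differential of a 1-form. -/
def d1 (l : V → V → V) (θ : V → ℝ) (u v : V) : ℝ := -θ (l u v)

/-- Wedge product of a 1-form with a 2-form, evaluated on three vectors. -/
def wedge12 (θ : V → ℝ) (ω : V → V → ℝ) (u v w : V) : ℝ :=
  θ u * ω v w - θ v * ω u w + θ w * ω u v

/-- The Koszul formula characterizing the Levi-Civita product of (g, k). -/
def IsLeviCivita (k : V → V → ℝ) (l : V → V → V) (nab : V → V → V) : Prop :=
  ∀ u v w, 2 * k (nab u v) w = k (l u v) w - k (l v w) u - k (l u w) v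

/-- Codifferential of a 2-form ω relative to a family E (an orthonormal basis)
    and a Levi-Civita product nab:  d*ω(X) = −Σ_i (∇_{E_i}ω)(E_i, X). -/
def codiff {ι : Type*} [Fintype ι] (E : ι → V) (nab : V → V → V)
    (ω : V → V → ℝ) (X : V) : ℝ :=
  -∑ i, (-(ω (nab (E i) (E i)) X) - ω (E i) (nab (E i) X))

/-- Lee form θ = −d*ω ∘ J. -/
def leeForm {ι : Type*} [Fintype ι] (E : ι → V) (nab : V → V → V)
    (k : V → V → ℝ) (J : V → V) (X : V) : ℝ :=
  -codiff E nab (fund k J) (J X)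

/-- A family is orthonormal with respect to k. -/
def Orthonormal' {ι : Type*} [DecidableEq ι] (k : V → V → ℝ) (E : ι → V) : Prop :=
  ∀ i j, k (E i) (E j) = if i = j then 1 else 0

/-- k is an inner product: symmetric, bilinear, positive definite. -/
def IsInner (k : V → V → ℝ) : Prop :=
  IsBilinMap k ∧ (∀ u v, k u v = k v u) ∧ (∀ u, u ≠ 0 → 0 < k u u)

/-- A Hermitian structure on the Lie algebra (V, l). -/
def IsHermitian (l : V → V → V) (J : V → V) (k : V → V → ℝ) : Prop :=
  IsInner k ∧ (∀ u, J (J u) = -u) ∧ (∀ u v, nijenhuis l J u v = 0) ∧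
  (∀ u v, k (J u) (J v) = k u v)

end TCPDefs

/-!
The Koszul formula computes the Lee form of any Lie algebra with a metric `k` and a
`k`-orthogonal complex structure `J` in an orthonormal basis `(eᵢ)`:
`θ(X) = -tr(ad X) + ½ Σᵢ k([eᵢ, J eᵢ], J X)`; the remaining terms pair up into
`tr(J ∘ ad Y) - tr(ad Y ∘ J)`, which vanishes. For the twisted product of two abelian
algebras and the basis adapted to `g₁ × g₂`, every `[eᵢ, J eᵢ]` is zero and `ad (x, a)` has
diagonal blocks `ρ₂(a)` and `ρ₁(x)`, so `θ(x, a) = -tr ρ₁(x) - tr ρ₂(a)`. Balancedness and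
closedness of `θ` (`dθ(u, v) = -θ([u, v])`) then become trace identities.
-/

namespace IsBilinMap

variable {V₁ V₂ W : Type*} [AddCommGroup V₁] [Module ℝ V₁] [AddCommGroup V₂] [Module ℝ V₂]
  [AddCommGroup W] [Module ℝ W] {f : V₁ → V₂ → W}

def toLinearMap₂ (hf : IsBilinMap f) : V₁ →ₗ[ℝ] V₂ →ₗ[ℝ] W :=
  LinearMap.mk₂ ℝ f hf.1 hf.2.1 hf.2.2.1 hf.2.2.2

theorem zero_left (hf : IsBilinMap f) (y : V₂) : f 0 y = 0 :=
  LinearMap.map_zero₂ hf.toLinearMap₂ y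

theorem zero_right (hf : IsBilinMap f) (x : V₁) : f x 0 = 0 :=
  (hf.toLinearMap₂ x).map_zero

theorem neg_left (hf : IsBilinMap f) (x : V₁) (y : V₂) : f (-x) y = -f x y :=
  LinearMap.map_neg₂ hf.toLinearMap₂ x y

theorem neg_right (hf : IsBilinMap f) (x : V₁) (y : V₂) : f x (-y) = -f x y :=
  (hf.toLinearMap₂ x).map_neg y

end IsBilinMap

section Orthonormal

variable {V ι : Type*} [AddCommGroup V] [Module ℝ V] [DecidableEq ι]
  {k : V → V → ℝ} {b : Module.Basis ι ℝ V}

theorem Orthonormal'.apply_basis_right (hk : IsBilinMap k) (hb : Orthonormal' k ⇑b)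
    (u : V) (j : ι) : k u (b j) = b.repr u j := by
  have h : hk.toLinearMap₂.flip (b j) = b.coord j :=
    b.ext fun i => by simp [IsBilinMap.toLinearMap₂, hb i j, Finsupp.single_apply]
  exact LinearMap.congr_fun h u

theorem Orthonormal'.sum_apply_basis_eq_trace [Fintype ι] (hk : IsBilinMap k)
    (hb : Orthonormal' k ⇑b) (A : Module.End ℝ V) :
    ∑ i, k (A (b i)) (b i) = LinearMap.trace ℝ V A := by
  simp only [LinearMap.trace_eq_matrix_trace ℝ b, Matrix.trace, Matrix.diag_apply,
    LinearMap.toMatrix_apply, hb.apply_basis_right hk]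

end Orthonormal

section LeeForm

variable {V : Type*} [AddCommGroup V] [Module ℝ V] {k : V → V → ℝ}
  {ad : V → Module.End ℝ V} {nab : V → V → V}

theorem IsLeviCivita.apply_nab_self (hk : IsBilinMap k) (had : ∀ u v, ad u v = -ad v u)
    (hnab : IsLeviCivita k (fun u v => ad u v) nab) (u w : V) :
    k (nab u u) w = k (ad w u) u := by
  have hself : ad u u = 0 := by
    have h2 : (2 : ℝ) • ad u u = 0 := by rw [two_smul]; exact eq_neg_iff_add_eq_zero.mp (had u u)
    exact (smul_eq_zero.mp h2).resolve_left two_ne_zero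
  have h := hnab u u w
  beta_reduce at h
  rw [hself, hk.zero_left, had u w, hk.neg_left] at h
  linarith

theorem apply_J_right_eq_neg_apply_J_left {J : Module.End ℝ V} (hk : IsBilinMap k)
    (hJJ : ∀ u, J (J u) = -u) (hkJ : ∀ u v, k (J u) (J v) = k u v) (u v : V) :
    k u (J v) = -k (J u) v := by
  rw [← hkJ u (J v), hJJ, hk.neg_right]

theorem IsLeviCivita.two_mul_sum_apply_nab_J {ι : Type*} [Fintype ι] [DecidableEq ι]
    {J : Module.End ℝ V} {b : Module.Basis ι ℝ V} (hk : IsBilinMap k)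
    (hJJ : ∀ u, J (J u) = -u) (hkJ : ∀ u v, k (J u) (J v) = k u v)
    (had : ∀ u v, ad u v = -ad v u) (hb : Orthonormal' k ⇑b)
    (hnab : IsLeviCivita k (fun u v => ad u v) nab) (Y : V) :
    2 * ∑ i, k (nab (b i) Y) (J (b i)) = -∑ i, k (ad (b i) (J (b i))) Y := by
  have hterm : ∀ i, 2 * k (nab (b i) Y) (J (b i)) =
      k ((J * ad Y) (b i)) (b i) - k ((ad Y * J) (b i)) (b i) - k (ad (b i) (J (b i))) Y := by
    intro i
    rw [hnab]
    beta_reduce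
    rw [had (b i) Y, hk.neg_left, apply_J_right_eq_neg_apply_J_left hk hJJ hkJ, neg_neg]
    rfl
  -- `tr (J ∘ ad Y) = tr (ad Y ∘ J)` cancels the first two sums
  rw [Finset.mul_sum, Finset.sum_congr rfl fun i _ => hterm i, Finset.sum_sub_distrib,
    Finset.sum_sub_distrib, hb.sum_apply_basis_eq_trace hk, hb.sum_apply_basis_eq_trace hk,
    LinearMap.trace_mul_comm, sub_self, zero_sub]

theorem leeForm_eq_neg_trace_add {ι : Type*} [Fintype ι] [DecidableEq ι]
    {J : Module.End ℝ V} {b : Module.Basis ι ℝ V} (hk : IsBilinMap k) (hks : ∀ u v, k u v = k v u)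
    (hJJ : ∀ u, J (J u) = -u) (hkJ : ∀ u v, k (J u) (J v) = k u v)
    (had : ∀ u v, ad u v = -ad v u) (hb : Orthonormal' k ⇑b)
    (hnab : IsLeviCivita k (fun u v => ad u v) nab) (X : V) :
    leeForm ⇑b nab k ⇑J X =
      -LinearMap.trace ℝ V (ad X) + (∑ i, k (ad (b i) (J (b i))) (J X)) / 2 := by
  have hterm : ∀ i, -fund k J (nab (b i) (b i)) (J X) - fund k J (b i) (nab (b i) (J X)) =
      -k (ad X (b i)) (b i) - k (nab (b i) (J X)) (J (b i)) := by
    intro i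
    rw [fund, fund, hkJ, hnab.apply_nab_self hk had, hks (J (b i))]
  have hsum := hnab.two_mul_sum_apply_nab_J hk hJJ hkJ had hb (J X)
  simp only [leeForm, codiff, neg_neg, hterm, Finset.sum_sub_distrib, Finset.sum_neg_distrib,
    hb.sum_apply_basis_eq_trace hk]
  linarith

end LeeForm

theorem LinearMap.trace_eq_trace_fst_comp_inl_add {R M N : Type*} [CommRing R]
    [AddCommGroup M] [Module R M] [Module.Free R M] [Module.Finite R M]
    [AddCommGroup N] [Module R N] [Module.Free R N] [Module.Finite R N]
    (f : Module.End R (M × N)) :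
    trace R (M × N) f = trace R M (fst R M N ∘ₗ f ∘ₗ inl R M N) +
      trace R N (snd R M N ∘ₗ f ∘ₗ inr R M N) :=
  calc trace R (M × N) f
      = trace R (M × N) (inl R M N ∘ₗ (fst R M N ∘ₗ f) + inr R M N ∘ₗ (snd R M N ∘ₗ f)) := by
        congr 1; ext <;> simp
    _ = _ := by
        rw [map_add, trace_comp_comm' (fst R M N ∘ₗ f), trace_comp_comm' (snd R M N ∘ₗ f)]
        rfl

section TwistedProduct

variable {V₁ V₂ : Type*} [AddCommGroup V₁] [Module ℝ V₁] [AddCommGroup V₂] [Module ℝ V₂]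
  (ρ1 : V₁ →ₗ[ℝ] Module.End ℝ V₂) (ρ2 : V₂ →ₗ[ℝ] Module.End ℝ V₁)

def twistedAd (u : V₁ × V₂) : Module.End ℝ (V₁ × V₂) :=
  (ρ2 u.2 ∘ₗ LinearMap.fst ℝ V₁ V₂ - ρ2.flip u.1 ∘ₗ LinearMap.snd ℝ V₁ V₂).prod
    (ρ1 u.1 ∘ₗ LinearMap.snd ℝ V₁ V₂ - ρ1.flip u.2 ∘ₗ LinearMap.fst ℝ V₁ V₂)

theorem twistedAd_apply (u v : V₁ × V₂) :
    twistedAd ρ1 ρ2 u v = (ρ2 u.2 v.1 - ρ2 v.2 u.1, ρ1 u.1 v.2 - ρ1 v.1 u.2) :=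
  rfl

theorem twBr_eq_twistedAd {l1 : V₁ → V₁ → V₁} {l2 : V₂ → V₂ → V₂}
    (habel1 : ∀ x y, l1 x y = 0) (habel2 : ∀ a b, l2 a b = 0) :
    twBr l1 l2 (fun x a => ρ1 x a) (fun a x => ρ2 a x) = fun u v => twistedAd ρ1 ρ2 u v := by
  ext u v <;> simp [twBr, twistedAd_apply, habel1, habel2]

theorem twistedAd_antisymm (u v : V₁ × V₂) : twistedAd ρ1 ρ2 u v = -twistedAd ρ1 ρ2 v u := by
  ext <;> simp [twistedAd_apply]

theorem trace_twistedAd [FiniteDimensional ℝ V₁] [FiniteDimensional ℝ V₂] (u : V₁ × V₂) :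
    LinearMap.trace ℝ _ (twistedAd ρ1 ρ2 u) =
      LinearMap.trace ℝ V₂ (ρ1 u.1) + LinearMap.trace ℝ V₁ (ρ2 u.2) := by
  have h1 : LinearMap.fst ℝ V₁ V₂ ∘ₗ twistedAd ρ1 ρ2 u ∘ₗ LinearMap.inl ℝ V₁ V₂ = ρ2 u.2 := by
    ext; simp [twistedAd_apply]
  have h2 : LinearMap.snd ℝ V₁ V₂ ∘ₗ twistedAd ρ1 ρ2 u ∘ₗ LinearMap.inr ℝ V₁ V₂ = ρ1 u.1 := by
    ext; simp [twistedAd_apply]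
  rw [LinearMap.trace_eq_trace_fst_comp_inl_add, h1, h2, add_comm]

end TwistedProduct

section ProductStructure

variable {V₁ V₂ ι₁ ι₂ : Type*} [AddCommGroup V₁] [Module ℝ V₁] [AddCommGroup V₂] [Module ℝ V₂]
  {k1 : V₁ → V₁ → ℝ} {k2 : V₂ → V₂ → ℝ}

theorem IsBilinMap.prodK (hk1 : IsBilinMap k1) (hk2 : IsBilinMap k2) :
    IsBilinMap (prodK k1 k2) := by
  obtain ⟨h1, h2, h3, h4⟩ := hk1
  obtain ⟨h1', h2', h3', h4'⟩ := hk2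
  refine ⟨fun _ _ _ => ?_, fun _ _ _ => ?_, fun _ _ _ => ?_, fun _ _ _ => ?_⟩ <;>
    simp only [_root_.prodK, Prod.fst_add, Prod.snd_add, Prod.smul_fst, Prod.smul_snd, smul_eq_mul,
      h1, h2, h3, h4, h1', h2', h3', h4'] <;> ring

theorem Orthonormal'.prod [DecidableEq ι₁] [DecidableEq ι₂] (hk1 : IsBilinMap k1)
    (hk2 : IsBilinMap k2) {b1 : ι₁ → V₁} {b2 : ι₂ → V₂}
    (hb1 : Orthonormal' k1 b1) (hb2 : Orthonormal' k2 b2) :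
    Orthonormal' (prodK k1 k2)
      (Sum.elim (fun i => (b1 i, (0 : V₂))) fun j => ((0 : V₁), b2 j)) := by
  rintro (i | i) (j | j)
  · simpa [prodK, hk2.zero_left] using hb1 i j
  · simp [prodK, hk1.zero_right, hk2.zero_left]
  · simp [prodK, hk1.zero_left, hk2.zero_right]
  · simpa [prodK, hk1.zero_left] using hb2 i j

end ProductStructure

theorem leeForm_twistedProduct {V₁ V₂ : Type*} [AddCommGroup V₁] [Module ℝ V₁]
    [FiniteDimensional ℝ V₁] [AddCommGroup V₂] [Module ℝ V₂] [FiniteDimensional ℝ V₂]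
    {l1 : V₁ → V₁ → V₁} {l2 : V₂ → V₂ → V₂}
    (habel1 : ∀ x y, l1 x y = 0) (habel2 : ∀ a b, l2 a b = 0)
    {J1 : Module.End ℝ V₁} {J2 : Module.End ℝ V₂} {k1 : V₁ → V₁ → ℝ} {k2 : V₂ → V₂ → ℝ}
    (hH1 : IsHermitian l1 (⇑J1) k1) (hH2 : IsHermitian l2 (⇑J2) k2)
    (ρ1 : V₁ →ₗ[ℝ] Module.End ℝ V₂) (ρ2 : V₂ →ₗ[ℝ] Module.End ℝ V₁)
    {ι₁ ι₂ : Type*} [Fintype ι₁] [DecidableEq ι₁] [Fintype ι₂] [DecidableEq ι₂]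
    {b1 : Module.Basis ι₁ ℝ V₁} (hb1 : Orthonormal' k1 ⇑b1)
    {b2 : Module.Basis ι₂ ℝ V₂} (hb2 : Orthonormal' k2 ⇑b2)
    {nab : V₁ × V₂ → V₁ × V₂ → V₁ × V₂}
    (hnab : IsLeviCivita (prodK k1 k2)
      (twBr l1 l2 (fun x a => ρ1 x a) (fun a x => ρ2 a x)) nab) (X : V₁ × V₂) :
    leeForm (Sum.elim (fun i => ((b1 i : V₁), (0 : V₂))) (fun j => ((0 : V₁), (b2 j : V₂))))
        nab (prodK k1 k2) (prodJ (⇑J1) (⇑J2)) X =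
      -(LinearMap.trace ℝ V₂ (ρ1 X.1) + LinearMap.trace ℝ V₁ (ρ2 X.2)) := by
  obtain ⟨⟨hk1, hk1s, -⟩, hJ1, -, hk1J⟩ := hH1
  obtain ⟨⟨hk2, hk2s, -⟩, hJ2, -, hk2J⟩ := hH2
  have hb := hb1.prod hk1 hk2 hb2
  have hE : Sum.elim (fun i => ((b1 i : V₁), (0 : V₂))) (fun j => ((0 : V₁), (b2 j : V₂))) =
      ⇑(b1.prod b2) := by
    ext (i | j) <;> simp
  have hJ : prodJ ⇑J1 ⇑J2 = ⇑(J1.prodMap J2) := rfl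
  have hks : ∀ u v, prodK k1 k2 u v = prodK k1 k2 v u := fun u v => by
    rw [prodK, prodK, hk1s, hk2s]
  have hJJ : ∀ u, J1.prodMap J2 (J1.prodMap J2 u) = -u := fun u => by ext <;> simp [hJ1, hJ2]
  have hkJ : ∀ u v, prodK k1 k2 (J1.prodMap J2 u) (J1.prodMap J2 v) = prodK k1 k2 u v :=
    fun u v => by simp [prodK, hk1J, hk2J]
  have hbracket : ∀ i, twistedAd ρ1 ρ2 (b1.prod b2 i) (J1.prodMap J2 (b1.prod b2 i)) = 0 := by
    rintro (i | j) <;> ext <;> simp [twistedAd_apply]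
  rw [twBr_eq_twistedAd ρ1 ρ2 habel1 habel2] at hnab
  rw [hE] at hb ⊢
  rw [hJ, leeForm_eq_neg_trace_add (hk1.prodK hk2) hks hJJ hkJ (twistedAd_antisymm ρ1 ρ2) hb hnab,
    trace_twistedAd]
  simp only [hbracket, (hk1.prodK hk2).zero_left, Finset.sum_const_zero, zero_div, add_zero]

theorem abelian_twisted_product_lee_balanced_lcb_general
    {V₁ V₂ : Type*} [AddCommGroup V₁] [Module ℝ V₁] [FiniteDimensional ℝ V₁]
    [AddCommGroup V₂] [Module ℝ V₂] [FiniteDimensional ℝ V₂]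
    (l1 : V₁ → V₁ → V₁) (l2 : V₂ → V₂ → V₂)
    (habel1 : ∀ x y, l1 x y = 0) (habel2 : ∀ a b, l2 a b = 0)
    (J1 : Module.End ℝ V₁) (J2 : Module.End ℝ V₂)
    (k1 : V₁ → V₁ → ℝ) (k2 : V₂ → V₂ → ℝ)
    (hH1 : IsHermitian l1 (⇑J1) k1) (hH2 : IsHermitian l2 (⇑J2) k2)
    (ρ1 : V₁ →ₗ[ℝ] Module.End ℝ V₂) (ρ2 : V₂ →ₗ[ℝ] Module.End ℝ V₁)
    {ι₁ ι₂ : Type*} [Fintype ι₁] [DecidableEq ι₁] [Fintype ι₂] [DecidableEq ι₂]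
    (b1 : Module.Basis ι₁ ℝ V₁) (hb1 : Orthonormal' k1 ⇑b1)
    (b2 : Module.Basis ι₂ ℝ V₂) (hb2 : Orthonormal' k2 ⇑b2)
    (nab : V₁ × V₂ → V₁ × V₂ → V₁ × V₂)
    (hnab : IsLeviCivita (prodK k1 k2)
      (twBr l1 l2 (fun x a => ρ1 x a) (fun a x => ρ2 a x)) nab) :
    (∀ x : V₁,
      leeForm (Sum.elim (fun i => ((b1 i : V₁), (0 : V₂)))
          (fun j => ((0 : V₁), (b2 j : V₂)))) nab (prodK k1 k2)
          (prodJ (⇑J1) (⇑J2)) (x, 0) = -LinearMap.trace ℝ V₂ (ρ1 x)) ∧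
    (∀ a : V₂,
      leeForm (Sum.elim (fun i => ((b1 i : V₁), (0 : V₂)))
          (fun j => ((0 : V₁), (b2 j : V₂)))) nab (prodK k1 k2)
          (prodJ (⇑J1) (⇑J2)) (0, a) = -LinearMap.trace ℝ V₁ (ρ2 a)) ∧
    ((∀ X : V₁ × V₂,
      leeForm (Sum.elim (fun i => ((b1 i : V₁), (0 : V₂)))
          (fun j => ((0 : V₁), (b2 j : V₂)))) nab (prodK k1 k2)
          (prodJ (⇑J1) (⇑J2)) X = 0) ↔
      ((∀ x : V₁, LinearMap.trace ℝ V₂ (ρ1 x) = 0) ∧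
       (∀ a : V₂, LinearMap.trace ℝ V₁ (ρ2 a) = 0))) ∧
    ((∀ u v : V₁ × V₂,
      d1 (twBr l1 l2 (fun x a => ρ1 x a) (fun a x => ρ2 a x))
        (leeForm (Sum.elim (fun i => ((b1 i : V₁), (0 : V₂)))
          (fun j => ((0 : V₁), (b2 j : V₂)))) nab (prodK k1 k2)
          (prodJ (⇑J1) (⇑J2))) u v = 0) ↔
      (∀ (x : V₁) (a : V₂),
        LinearMap.trace ℝ V₁ (ρ2 (ρ1 x a)) = LinearMap.trace ℝ V₂ (ρ1 (ρ2 a x)))) := by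
  have lee := leeForm_twistedProduct habel1 habel2 hH1 hH2 ρ1 ρ2 hb1 hb2 hnab
  set θ := leeForm (Sum.elim (fun i => ((b1 i : V₁), (0 : V₂)))
    (fun j => ((0 : V₁), (b2 j : V₂)))) nab (prodK k1 k2) (prodJ (⇑J1) (⇑J2))
  have hdθ : ∀ u v : V₁ × V₂, d1 (twBr l1 l2 (fun x a => ρ1 x a) (fun a x => ρ2 a x)) θ u v =
      (LinearMap.trace ℝ V₁ (ρ2 (ρ1 u.1 v.2)) - LinearMap.trace ℝ V₂ (ρ1 (ρ2 v.2 u.1))) -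
        (LinearMap.trace ℝ V₁ (ρ2 (ρ1 v.1 u.2)) - LinearMap.trace ℝ V₂ (ρ1 (ρ2 u.2 v.1))) := by
    intro u v
    simp only [d1, twBr_eq_twistedAd ρ1 ρ2 habel1 habel2, lee, twistedAd_apply, map_sub]
    ring
  refine ⟨fun x => by simp [lee], fun a => by simp [lee],
    ⟨fun h => ⟨fun x => ?_, fun a => ?_⟩, fun h X => by simp [lee, h.1, h.2]⟩,
    ⟨fun h x a => ?_, fun h u v => ?_⟩⟩
  · simpa [lee] using h (x, 0)
  · simpa [lee] using h (0, a)
  · simpa [hdθ, sub_eq_zero] using h (x, 0) (0, a)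
  · rw [hdθ, h, h, sub_self, sub_self, sub_self]

/-- Lee form, balancedness and the LCB condition for the
Hermitian twisted cartesian product of two abelian Hermitian Lie algebras. -/
theorem abelian_twisted_product_lee_balanced_lcb
    {V₁ V₂ : Type*} [AddCommGroup V₁] [Module ℝ V₁] [FiniteDimensional ℝ V₁]
    [AddCommGroup V₂] [Module ℝ V₂] [FiniteDimensional ℝ V₂]
    (l1 : V₁ → V₁ → V₁) (l2 : V₂ → V₂ → V₂)
    (habel1 : ∀ x y, l1 x y = 0) (habel2 : ∀ a b, l2 a b = 0)
    (J1 : Module.End ℝ V₁) (J2 : Module.End ℝ V₂)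
    (k1 : V₁ → V₁ → ℝ) (k2 : V₂ → V₂ → ℝ)
    (hH1 : IsHermitian l1 (⇑J1) k1) (hH2 : IsHermitian l2 (⇑J2) k2)
    (ρ1 : V₁ →ₗ[ℝ] Module.End ℝ V₂) (ρ2 : V₂ →ₗ[ℝ] Module.End ℝ V₁)
    (hcompat : Compat (fun x a => ρ1 x a) (fun a x => ρ2 a x))
    (hcomm1 : ∀ x : V₁, ρ1 x * J2 = J2 * ρ1 x)
    (hcomm2 : ∀ a : V₂, ρ2 a * J1 = J1 * ρ2 a)
    {ι₁ ι₂ : Type*} [Fintype ι₁] [DecidableEq ι₁] [Fintype ι₂] [DecidableEq ι₂]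
    (b1 : Module.Basis ι₁ ℝ V₁) (hb1 : Orthonormal' k1 ⇑b1)
    (b2 : Module.Basis ι₂ ℝ V₂) (hb2 : Orthonormal' k2 ⇑b2)
    (nab : V₁ × V₂ → V₁ × V₂ → V₁ × V₂)
    (hnab : IsLeviCivita (prodK k1 k2)
      (twBr l1 l2 (fun x a => ρ1 x a) (fun a x => ρ2 a x)) nab) :
    (∀ x : V₁,
      leeForm (Sum.elim (fun i => ((b1 i : V₁), (0 : V₂)))
          (fun j => ((0 : V₁), (b2 j : V₂)))) nab (prodK k1 k2)
          (prodJ (⇑J1) (⇑J2)) (x, 0) = -LinearMap.trace ℝ V₂ (ρ1 x)) ∧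
    (∀ a : V₂,
      leeForm (Sum.elim (fun i => ((b1 i : V₁), (0 : V₂)))
          (fun j => ((0 : V₁), (b2 j : V₂)))) nab (prodK k1 k2)
          (prodJ (⇑J1) (⇑J2)) (0, a) = -LinearMap.trace ℝ V₁ (ρ2 a)) ∧
    ((∀ X : V₁ × V₂,
      leeForm (Sum.elim (fun i => ((b1 i : V₁), (0 : V₂)))
          (fun j => ((0 : V₁), (b2 j : V₂)))) nab (prodK k1 k2)
          (prodJ (⇑J1) (⇑J2)) X = 0) ↔
      ((∀ x : V₁, LinearMap.trace ℝ V₂ (ρ1 x) = 0) ∧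
       (∀ a : V₂, LinearMap.trace ℝ V₁ (ρ2 a) = 0))) ∧
    ((∀ u v : V₁ × V₂,
      d1 (twBr l1 l2 (fun x a => ρ1 x a) (fun a x => ρ2 a x))
        (leeForm (Sum.elim (fun i => ((b1 i : V₁), (0 : V₂)))
          (fun j => ((0 : V₁), (b2 j : V₂)))) nab (prodK k1 k2)
          (prodJ (⇑J1) (⇑J2))) u v = 0) ↔
      (∀ (x : V₁) (a : V₂),
        LinearMap.trace ℝ V₁ (ρ2 (ρ1 x a)) = LinearMap.trace ℝ V₂ (ρ1 (ρ2 a x)))) :=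
  abelian_twisted_product_lee_balanced_lcb_general l1 l2 habel1 habel2 J1 J2 k1 k2 hH1 hH2 ρ1 ρ2 b1
    hb1 b2 hb2 nab hnab
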